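/- Let 0 → U⊗V →i Π →j K → 0 be exact (finite-dimensional real vector spaces, U, V nonzero). Then dim Π*_U = dim U · dim K + dim V, where Π*_U = {ε ∈ Hom(Π,U) : ∃ v* ∈ V*, ε∘i = id_U ⊗ v*}. -/
import Mathlib


open Function Module

/-- The contraction `id_U ⊗ v* : U ⊗ V → U`, `u ⊗ v ↦ v*(v) • u`. -/
noncomputable def contractR (U V : Type*) [AddCommGroup U] [Module ℝ U]
    [AddCommGroup V] [Module ℝ V] (f : V →ₗ[ℝ] ℝ) :
    TensorProduct ℝ U V →ₗ[ℝ] U :=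
  (TensorProduct.rid ℝ U).toLinearMap ∘ₗ LinearMap.lTensor U f

theorem stmt13 (U V K W : Type*)
    [AddCommGroup U] [Module ℝ U] [FiniteDimensional ℝ U] [Nontrivial U]
    [AddCommGroup V] [Module ℝ V] [FiniteDimensional ℝ V] [Nontrivial V]
    [AddCommGroup K] [Module ℝ K] [FiniteDimensional ℝ K]
    [AddCommGroup W] [Module ℝ W] [FiniteDimensional ℝ W]
    (i : TensorProduct ℝ U V →ₗ[ℝ] W) (j : W →ₗ[ℝ] K)
    (hi : Injective i) (hj : Surjective j)
    (hij : LinearMap.range i = LinearMap.ker j)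
    (S : Submodule ℝ (W →ₗ[ℝ] U))
    (hS : (S : Set (W →ₗ[ℝ] U)) =
      {ε | ∃ vs : V →ₗ[ℝ] ℝ, ε ∘ₗ i = contractR U V vs}) :
    finrank ℝ S = finrank ℝ U * finrank ℝ K + finrank ℝ V := by
  classical
  -- T : composition with i
  set T : (W →ₗ[ℝ] U) →ₗ[ℝ] (TensorProduct ℝ U V →ₗ[ℝ] U) := i.lcomp ℝ U with hT
  -- C : vs ↦ contractR U V vs, as a linear map
  set C : (V →ₗ[ℝ] ℝ) →ₗ[ℝ] (TensorProduct ℝ U V →ₗ[ℝ] U) :=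
    (LinearMap.llcomp ℝ (TensorProduct ℝ U V) (TensorProduct ℝ U ℝ) U
      (TensorProduct.rid ℝ U).toLinearMap) ∘ₗ LinearMap.lTensorHom U with hC
  have hCapp : ∀ vs : V →ₗ[ℝ] ℝ, C vs = contractR U V vs := fun vs => rfl
  -- T is surjective
  have hTsurj : Surjective T := by
    obtain ⟨g, hg⟩ := i.exists_leftInverse_of_injective (LinearMap.ker_eq_bot.2 hi)
    intro f
    refine ⟨f ∘ₗ g, ?_⟩
    show (f ∘ₗ g) ∘ₗ i = f
    rw [LinearMap.comp_assoc, hg, LinearMap.comp_id]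
  -- C is injective
  have hCinj : Injective C := by
    rw [injective_iff_map_eq_zero]
    intro vs hvs
    obtain ⟨u, hu⟩ := exists_ne (0 : U)
    ext v
    have := congrArg (fun f : TensorProduct ℝ U V →ₗ[ℝ] U => f (u ⊗ₜ v)) hvs
    simp only [hCapp, contractR, LinearMap.coe_comp, Function.comp_apply,
      LinearMap.lTensor_tmul, LinearEquiv.coe_coe, TensorProduct.rid_tmul,
      LinearMap.zero_apply] at this
    rcases smul_eq_zero.1 this with h | h
    · simpa using h
    · exact absurd h hu
  -- S = comap T (range C)
  have hSeq : S = Submodule.comap T (LinearMap.range C) := by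
    ext ε
    rw [← SetLike.mem_coe, hS]
    simp only [Set.mem_setOf_eq, Submodule.mem_comap, LinearMap.mem_range]
    constructor
    · rintro ⟨vs, h⟩; exact ⟨vs, by rw [hCapp]; exact h.symm⟩
    · rintro ⟨vs, h⟩; exact ⟨vs, by rw [← hCapp]; exact h.symm⟩
  -- kernel of T is contained in S
  have hker : LinearMap.ker T ≤ S := by
    rw [hSeq]
    intro ε hε
    rw [LinearMap.mem_ker] at hε
    simp [hε]
  -- rank-nullity for T.domRestrict S
  have h1 : finrank ℝ (LinearMap.range (T.domRestrict S))
      + finrank ℝ (LinearMap.ker (T.domRestrict S)) = finrank ℝ S :=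
    LinearMap.finrank_range_add_finrank_ker _
  have hrange : LinearMap.range (T.domRestrict S) = LinearMap.range C := by
    rw [LinearMap.range_domRestrict, hSeq, Submodule.map_comap_eq,
      LinearMap.range_eq_top.2 hTsurj, top_inf_eq]
  have hkerD : LinearMap.ker (T.domRestrict S) = Submodule.comap S.subtype (LinearMap.ker T) := by
    rw [LinearMap.ker_domRestrict]
  have hkerfin : finrank ℝ (LinearMap.ker (T.domRestrict S)) = finrank ℝ (LinearMap.ker T) := by
    rw [hkerD]
    exact LinearEquiv.finrank_eq (Submodule.comapSubtypeEquivOfLe hker)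
  -- dimension of range C
  have hrc : finrank ℝ (LinearMap.range C) = finrank ℝ V := by
    rw [LinearMap.finrank_range_of_inj hCinj, Module.finrank_linearMap, Module.finrank_self,
      mul_one]
  -- dimension of W
  have hW : finrank ℝ W = finrank ℝ U * finrank ℝ V + finrank ℝ K := by
    have h2 : finrank ℝ (LinearMap.range j) + finrank ℝ (LinearMap.ker j) = finrank ℝ W :=
      LinearMap.finrank_range_add_finrank_ker j
    rw [LinearMap.range_eq_top.2 hj, finrank_top, ← hij,
      LinearMap.finrank_range_of_inj hi, Module.finrank_tensorProduct] at h2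
    omega
  -- dimension of ker T
  have hkt : finrank ℝ (LinearMap.ker T) = finrank ℝ U * finrank ℝ K := by
    have h3 : finrank ℝ (LinearMap.range T) + finrank ℝ (LinearMap.ker T)
        = finrank ℝ (W →ₗ[ℝ] U) := LinearMap.finrank_range_add_finrank_ker T
    rw [LinearMap.range_eq_top.2 hTsurj, finrank_top, Module.finrank_linearMap,
      Module.finrank_linearMap, Module.finrank_tensorProduct, hW, add_mul] at h3
    have := Nat.add_left_cancel h3
    rw [this, Nat.mul_comm]
  rw [← h1, hrange, hrc, hkerfin, hkt]
  omega
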